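/- arXiv:1803.04800 — 2 statements merged into one kernel-verified Lean document; each statement's English description precedes it below -/
import Mathlib

section
/- Let τ ≥ 1, let γ₁,…,γ_τ ∈ ℂ be linearly independent over ℚ, let ρᵢⱼ ∈ ℤ (1 ≤ i ≤ τ, 1 ≤ j ≤ n), let Zᵢ be the diagonal linear vector field with components (Zᵢ)ⱼ = √−1·ρᵢⱼ·xⱼ, and let S := Σᵢ γᵢ·Zᵢ. Suppose H ∈ R, H ≠ 0, and c ∈ ℂ satisfy S(H) = c·H. Then for each i = 1,…,τ there exists a unique cᵢ ∈ ℂ such that Zᵢ(H) = cᵢ·H; moreover each cᵢ is √−1 times an integer, and Σᵢ γᵢ·cᵢ = c. -/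
open Finset

noncomputable def psPderiv {n : ℕ} (j : Fin n) (F : MvPowerSeries (Fin n) ℂ) :
    MvPowerSeries (Fin n) ℂ :=
  fun a => ((a j + 1 : ℕ) : ℂ) * MvPowerSeries.coeff (a + Finsupp.single j 1) F

noncomputable def vfApply {n : ℕ} (V : Fin n → MvPowerSeries (Fin n) ℂ)
    (F : MvPowerSeries (Fin n) ℂ) : MvPowerSeries (Fin n) ℂ :=
  ∑ j, V j * psPderiv j F

noncomputable def vfLie {n : ℕ} (U V : Fin n → MvPowerSeries (Fin n) ℂ) :
    Fin n → MvPowerSeries (Fin n) ℂ :=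
  fun j => vfApply U (V j) - vfApply V (U j)

noncomputable def diagVF {n : ℕ} (lam : Fin n → ℂ) : Fin n → MvPowerSeries (Fin n) ℂ :=
  fun j => MvPowerSeries.C (lam j) * MvPowerSeries.X j

def IsPDNormalForm {n : ℕ} (lam : Fin n → ℂ) (Xf : Fin n → MvPowerSeries (Fin n) ℂ) : Prop :=
  (∀ j, MvPowerSeries.coeff 0 (Xf j) = 0) ∧
  (∃ A : Matrix (Fin n) (Fin n) ℂ, IsNilpotent A ∧
      A * Matrix.diagonal lam = Matrix.diagonal lam * A ∧
      ∀ j l, MvPowerSeries.coeff (Finsupp.single l 1) (Xf j)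
        = (if l = j then lam j else 0) + A j l) ∧
  (∀ j, vfLie (diagVF lam) Xf j = 0)

/-!
The diagonal field `S_λ` multiplies the coefficient of `x^a` by `⟨λ, a⟩`, so `S_λ F = c F`
exactly when `⟨λ, a⟩ = c` on the support of `F`. For `S = Σ γᵢ Zᵢ` this reads
`√-1 · Σᵢ wᵢ(a) γᵢ = c` with integer weights `wᵢ(a) = ⟨ρᵢ, a⟩`, for every `a` in the support
of `H`. By `ℚ`-linear independence of the `γᵢ` the weights `wᵢ(a)` do not depend on `a`, so
`Zᵢ H = √-1 wᵢ(a₀) H` for any fixed `a₀` in the support.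
-/

open MvPowerSeries

theorem MvPowerSeries.eq_of_C_mul_eq_C_mul {σ R : Type*} [CommRing R] [IsDomain R]
    {F : MvPowerSeries σ R} (hF : F ≠ 0) {c d : R} (h : C c * F = C d * F) : c = d :=
  C_injective (mul_right_cancel₀ hF h)

section DiagonalVectorFields

variable {n : ℕ}

theorem coeff_psPderiv (j : Fin n) (F : MvPowerSeries (Fin n) ℂ) (a : Fin n →₀ ℕ) :
    coeff a (psPderiv j F) = ((a j + 1 : ℕ) : ℂ) * coeff (a + Finsupp.single j 1) F :=
  rfl

theorem coeff_vfApply_diagVF (lam : Fin n → ℂ) (F : MvPowerSeries (Fin n) ℂ)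
    (a : Fin n →₀ ℕ) :
    coeff a (vfApply (diagVF lam) F) = (∑ j, lam j * a j) * coeff a F := by
  classical
  rw [vfApply, map_sum, Finset.sum_mul]
  refine Finset.sum_congr rfl fun j _ => ?_
  rw [diagVF, mul_assoc, coeff_C_mul, X_def, coeff_monomial_mul]
  by_cases h : Finsupp.single j 1 ≤ a
  · obtain ⟨b, rfl⟩ : ∃ b, a = b + Finsupp.single j 1 :=
      ⟨a - Finsupp.single j 1, (tsub_add_cancel_of_le h).symm⟩
    rw [if_pos h, one_mul, add_tsub_cancel_right, coeff_psPderiv]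
    simp only [Finsupp.add_apply, Finsupp.single_eq_same]
    push_cast
    ring
  · have ha : a j = 0 := by
      by_contra hne
      exact h (Finsupp.single_le_iff.mpr (Nat.one_le_iff_ne_zero.mpr hne))
    simp [h, ha]

theorem vfApply_diagVF_eq_C_mul_iff (lam : Fin n → ℂ) (F : MvPowerSeries (Fin n) ℂ) (c : ℂ) :
    vfApply (diagVF lam) F = C c * F ↔ ∀ a, coeff a F ≠ 0 → ∑ j, lam j * a j = c := by
  simp only [MvPowerSeries.ext_iff, coeff_vfApply_diagVF, coeff_C_mul]
  refine forall_congr' fun a => ⟨fun h ha => mul_right_cancel₀ ha h, fun h => ?_⟩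
  by_cases ha : coeff a F = 0
  · simp [ha]
  · rw [h ha]

end DiagonalVectorFields

theorem LinearIndependent.eq_of_sum_zsmul_eq {ι M : Type*} [Fintype ι] [AddCommGroup M]
    [Module ℚ M] {v : ι → M} (hv : LinearIndependent ℚ v) {k l : ι → ℤ}
    (h : ∑ i, k i • v i = ∑ i, l i • v i) : k = l :=
  funext (Fintype.linearIndependent_iffₛ.mp (hv.restrict_scalars' ℤ) k l h)

section TorusWeights

variable {n : ℕ}

def monomialWeight (ρ : Fin n → ℤ) (a : Fin n →₀ ℕ) : ℤ := ∑ j, ρ j * a j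

theorem sum_I_mul_mul_eq_monomialWeight (ρ : Fin n → ℤ) (a : Fin n →₀ ℕ) :
    ∑ j, Complex.I * ρ j * a j = Complex.I * monomialWeight ρ a := by
  simp only [monomialWeight, Int.cast_sum, Int.cast_mul, Int.cast_natCast, Finset.mul_sum,
    mul_assoc]

theorem sum_sum_mul_I_mul_mul_eq_monomialWeight {τ : ℕ} (γ : Fin τ → ℂ) (ρ : Fin τ → Fin n → ℤ)
    (a : Fin n →₀ ℕ) :
    ∑ j, (∑ i, γ i * (Complex.I * ρ i j)) * a j
      = Complex.I * ∑ i, monomialWeight (ρ i) a • γ i := by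
  calc ∑ j, (∑ i, γ i * (Complex.I * ρ i j)) * a j
        = ∑ i, γ i * ∑ j, Complex.I * ρ i j * a j := by
          simp only [Finset.sum_mul, Finset.mul_sum, mul_assoc]
          exact Finset.sum_comm
    _ = Complex.I * ∑ i, monomialWeight (ρ i) a • γ i := by
          simp only [sum_I_mul_mul_eq_monomialWeight, Finset.mul_sum, zsmul_eq_mul]
          exact Finset.sum_congr rfl fun i _ => by ring

end TorusWeights

theorem eigen_of_torus_generators_general {n τ : ℕ}
    (γ : Fin τ → ℂ) (hγ : LinearIndependent ℚ γ)
    (ρ : Fin τ → Fin n → ℤ)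
    (Z : Fin τ → Fin n → MvPowerSeries (Fin n) ℂ)
    (hZ : ∀ i j, Z i j
      = MvPowerSeries.C (Complex.I * (ρ i j : ℂ)) * MvPowerSeries.X j)
    (S : Fin n → MvPowerSeries (Fin n) ℂ)
    (hS : ∀ j, S j = ∑ i, MvPowerSeries.C (γ i) * Z i j)
    (H : MvPowerSeries (Fin n) ℂ) (hH : H ≠ 0) (c : ℂ)
    (hc : vfApply S H = MvPowerSeries.C c * H) :
    (∀ i, ∃! ci : ℂ, vfApply (Z i) H = MvPowerSeries.C ci * H) ∧
    ∃ cv : Fin τ → ℂ,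
      (∀ i, vfApply (Z i) H = MvPowerSeries.C (cv i) * H) ∧
      (∀ i, ∃ k : ℤ, cv i = Complex.I * (k : ℂ)) ∧
      ∑ i, γ i * cv i = c := by
  have hZ' (i) : Z i = diagVF fun j => Complex.I * ρ i j := funext (hZ i)
  have hS' : S = diagVF fun j => ∑ i, γ i * (Complex.I * ρ i j) := funext fun j => by
    simp only [hS, hZ, diagVF, map_sum, map_mul, Finset.sum_mul, mul_assoc]
  obtain ⟨a₀, ha₀⟩ : ∃ a, coeff a H ≠ 0 := not_forall.mp fun h => hH (MvPowerSeries.ext h)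
  have hweight_S : ∀ a, coeff a H ≠ 0 → Complex.I * ∑ i, monomialWeight (ρ i) a • γ i = c := by
    rw [hS', vfApply_diagVF_eq_C_mul_iff] at hc
    intro a ha
    rw [← hc a ha, sum_sum_mul_I_mul_mul_eq_monomialWeight]
  have hweight_const : ∀ a, coeff a H ≠ 0 →
      (fun i => monomialWeight (ρ i) a) = fun i => monomialWeight (ρ i) a₀ := fun a ha =>
    hγ.eq_of_sum_zsmul_eq <|
      mul_left_cancel₀ Complex.I_ne_zero ((hweight_S a ha).trans (hweight_S a₀ ha₀).symm)
  set cv : Fin τ → ℂ := fun i => Complex.I * monomialWeight (ρ i) a₀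
  have heig (i) : vfApply (Z i) H = C (cv i) * H := by
    rw [hZ', vfApply_diagVF_eq_C_mul_iff]
    intro a ha
    rw [sum_I_mul_mul_eq_monomialWeight, congrFun (hweight_const a ha) i]
  refine ⟨fun i => ⟨cv i, heig i, fun d hd => eq_of_C_mul_eq_C_mul hH (hd.symm.trans (heig i))⟩,
    cv, heig, fun i => ⟨_, rfl⟩, ?_⟩
  rw [← hweight_S a₀ ha₀, Finset.mul_sum]
  exact Finset.sum_congr rfl fun i _ => by rw [zsmul_eq_mul]; ring

/-- If `Z i` are the diagonal linear vector fields with components `√-1·ρ i j·x j`,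
`γ i` are linearly independent over `ℚ`, `S = Σ γ i • Z i`, and `H ≠ 0` satisfies
`S(H) = c·H`, then for each `i` there is a unique `c i` with `Z i (H) = c i • H`;
moreover each `c i` is `√-1` times an integer and `Σ γ i · c i = c`. -/
theorem eigen_of_torus_generators {n τ : ℕ} (hτ : 1 ≤ τ)
    (γ : Fin τ → ℂ) (hγ : LinearIndependent ℚ γ)
    (ρ : Fin τ → Fin n → ℤ)
    (Z : Fin τ → Fin n → MvPowerSeries (Fin n) ℂ)
    (hZ : ∀ i j, Z i j
      = MvPowerSeries.C (Complex.I * (ρ i j : ℂ)) * MvPowerSeries.X j)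
    (S : Fin n → MvPowerSeries (Fin n) ℂ)
    (hS : ∀ j, S j = ∑ i, MvPowerSeries.C (γ i) * Z i j)
    (H : MvPowerSeries (Fin n) ℂ) (hH : H ≠ 0) (c : ℂ)
    (hc : vfApply S H = MvPowerSeries.C c * H) :
    (∀ i, ∃! ci : ℂ, vfApply (Z i) H = MvPowerSeries.C ci * H) ∧
    ∃ cv : Fin τ → ℂ,
      (∀ i, vfApply (Z i) H = MvPowerSeries.C (cv i) * H) ∧
      (∀ i, ∃ k : ℤ, cv i = Complex.I * (k : ℂ)) ∧
      ∑ i, γ i * cv i = c :=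
  eigen_of_torus_generators_general γ hγ ρ Z hZ S hS H hH c hc
end

section
/- Let B = B(0,r) be an open ball centered at 0 in ℂⁿ, let X' : B → ℂⁿ and H : B → ℂ be holomorphic with H not identically zero, and let S ⊆ B be a closed set with 0 ∈ S containing the zero set {z ∈ B : H(z) = 0}. Suppose there exist D ∈ ℕ and δ > 0 such that |H(z)| ≥ dist(z,S)^D for all z with ‖z‖ < δ. Let ν, m ∈ ℕ, set μ := ν + 2 + 2Dm, and let Z : B → ℂⁿ be a holomorphic vector field such that the holomorphic vector field W := (dH·Z)·X' − H·[Z,X'] vanishes to order at least μ − 1 at 0, i.e., the Taylor expansion of W at 0 contains no terms of degree less than μ − 1. Then there exists ε > 0 such that for every z with ‖z‖ ≤ ε and dist(z,S) ≥ ‖z‖^m one has ‖W(z)‖ ≤ |H(z)|²·‖z‖^ν (equivalently, the bracket of Z with the rational vector field X'/H satisfies ‖[Z, X'/H](z)‖ ≤ ‖z‖^ν at such points). -/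
/-!
`W` is analytic at `0` and its Taylor polynomial of degree `< ν + 2Dm + 1` vanishes, so
`‖W z‖ ≤ ‖z‖ ^ (ν + 2Dm)` near `0`. In the region `dist(z, S) ≥ ‖z‖ ^ m` the Łojasiewicz
inequality gives `‖H z‖ ≥ ‖z‖ ^ (mD)`, and `‖z‖ ^ (ν + 2Dm) = (‖z‖ ^ (mD)) ^ 2 * ‖z‖ ^ ν`.
-/

open Metric Filter Topology Asymptotics VectorField

section

variable {𝕜 : Type*} [NontriviallyNormedField 𝕜]
  {E F G : Type*} [NormedAddCommGroup E] [NormedSpace 𝕜 E] [NormedAddCommGroup F]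
  [NormedSpace 𝕜 F] [NormedAddCommGroup G] [NormedSpace 𝕜 G] {x : E}

theorem AnalyticAt.clm_apply {g : E → F →L[𝕜] G} {v : E → F} (hg : AnalyticAt 𝕜 g x)
    (hv : AnalyticAt 𝕜 v x) : AnalyticAt 𝕜 (fun z => g z (v z)) x :=
  ((ContinuousLinearMap.apply 𝕜 G).analyticAt_bilinear (v x, g x)).comp₂ hv hg

theorem AnalyticAt.lieBracket [CompleteSpace E] {V W : E → E} (hV : AnalyticAt 𝕜 V x)
    (hW : AnalyticAt 𝕜 W x) : AnalyticAt 𝕜 (lieBracket 𝕜 V W) x :=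
  (hW.fderiv.clm_apply hV).sub (hV.fderiv.clm_apply hW)

theorem HasFPowerSeriesAt.partialSum_eq_zero_of_iteratedFDeriv_eq_zero [CharZero 𝕜]
    [CompleteSpace F] {f : E → F} {p : FormalMultilinearSeries 𝕜 E F} {k : ℕ}
    (hp : HasFPowerSeriesAt f p x) (hf : ∀ j < k, iteratedFDeriv 𝕜 j f x = 0) (y : E) :
    p.partialSum k y = 0 := by
  obtain ⟨R, hR⟩ := hp
  refine Finset.sum_eq_zero fun j hj => ?_
  have hfac := hR.factorial_smul y j
  rw [hf j (Finset.mem_range.mp hj), zero_apply,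
    ← Nat.cast_smul_eq_nsmul 𝕜] at hfac
  exact (smul_eq_zero.mp hfac).resolve_left (Nat.cast_ne_zero.mpr j.factorial_ne_zero)

theorem AnalyticAt.isBigO_pow_of_iteratedFDeriv_eq_zero [CharZero 𝕜] [CompleteSpace F]
    {f : E → F} {k : ℕ} (hf : AnalyticAt 𝕜 f x) (hk : ∀ j < k, iteratedFDeriv 𝕜 j f x = 0) :
    (fun y => f (x + y)) =O[𝓝 0] fun y => ‖y‖ ^ k := by
  obtain ⟨p, hp⟩ := hf
  simpa [hp.partialSum_eq_zero_of_iteratedFDeriv_eq_zero hk] using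
    hp.isBigO_sub_partialSum_pow k

theorem Asymptotics.IsBigO.eventually_norm_le_norm_pow {g : E → F} {k : ℕ}
    (hg : g =O[𝓝 0] fun y => ‖y‖ ^ (k + 1)) : ∀ᶠ y in 𝓝 0, ‖g y‖ ≤ ‖y‖ ^ k := by
  have hpow : (fun y : E => ‖y‖ ^ (k + 1)) =o[𝓝 0] fun y => ‖y‖ ^ k :=
    (isLittleO_pow_pow k.lt_succ_self).comp_tendsto
      (continuous_norm.tendsto' (0 : E) 0 norm_zero)
  filter_upwards [(hg.trans_isLittleO hpow).bound one_pos] with y hy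
  simpa using hy

end

theorem near_invariance_estimate_general {n : ℕ} (r : ℝ) (hr : 0 < r)
    (X' : (Fin n → ℂ) → (Fin n → ℂ)) (H : (Fin n → ℂ) → ℂ)
    (hX' : AnalyticOnNhd ℂ X' (ball (0 : Fin n → ℂ) r))
    (hH : AnalyticOnNhd ℂ H (ball (0 : Fin n → ℂ) r))
    (S : Set (Fin n → ℂ))
    (D : ℕ) (δ : ℝ) (hδ : 0 < δ)
    (hLoj : ∀ z : Fin n → ℂ, ‖z‖ < δ → infDist z S ^ D ≤ ‖H z‖)
    (ν m : ℕ) (μ : ℕ) (hμ : μ = ν + 2 + 2 * D * m)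
    (Z : (Fin n → ℂ) → (Fin n → ℂ)) (hZ : AnalyticOnNhd ℂ Z (ball (0 : Fin n → ℂ) r))
    (W : (Fin n → ℂ) → (Fin n → ℂ))
    (hW : W = fun z => (fderiv ℂ H z (Z z)) • X' z
        - H z • (fderiv ℂ X' z (Z z) - fderiv ℂ Z z (X' z)))
    (hvanish : ∀ j : ℕ, j < μ - 1 → iteratedFDeriv ℂ j W 0 = 0) :
    ∃ ε > 0, ∀ z : Fin n → ℂ, ‖z‖ ≤ ε → ‖z‖ ^ m ≤ infDist z S →
      ‖W z‖ ≤ ‖H z‖ ^ 2 * ‖z‖ ^ ν := by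
  have h0 : (0 : Fin n → ℂ) ∈ ball (0 : Fin n → ℂ) r := mem_ball_self hr
  have hWa : AnalyticAt ℂ W 0 := hW ▸
    (((hH 0 h0).fderiv.clm_apply (hZ 0 h0)).smul (hX' 0 h0)).sub
      ((hH 0 h0).smul ((hZ 0 h0).lieBracket (hX' 0 h0)))
  rw [show μ - 1 = ν + 2 * D * m + 1 by omega] at hvanish
  have hsmall : ∀ᶠ z in 𝓝 0, ‖W z‖ ≤ ‖z‖ ^ (ν + 2 * D * m) := by
    simpa using (hWa.isBigO_pow_of_iteratedFDeriv_eq_zero hvanish).eventually_norm_le_norm_pow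
  obtain ⟨ε, hε, hball⟩ := nhds_basis_closedBall.eventually_iff.mp
    (hsmall.and (eventually_norm_sub_lt (0 : Fin n → ℂ) hδ))
  refine ⟨ε, hε, fun z hzε hhorn => ?_⟩
  obtain ⟨hWz, hzδ⟩ := hball (mem_closedBall_zero_iff.mpr hzε)
  have hHz : ‖z‖ ^ (m * D) ≤ ‖H z‖ := calc
    ‖z‖ ^ (m * D) = (‖z‖ ^ m) ^ D := pow_mul _ _ _
    _ ≤ infDist z S ^ D := by gcongr
    _ ≤ ‖H z‖ := hLoj z (by simpa using hzδ)
  calc ‖W z‖ ≤ ‖z‖ ^ (ν + 2 * D * m) := hWz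
    _ = (‖z‖ ^ (m * D)) ^ 2 * ‖z‖ ^ ν := by ring
    _ ≤ ‖H z‖ ^ 2 * ‖z‖ ^ ν := by gcongr

/-- Near-invariance estimate: if `W = (dH·Z)·X' − H·[Z,X']` vanishes to order at least
`μ − 1 = ν + 1 + 2Dm` at `0`, and the Łojasiewicz inequality `|H(z)| ≥ dist(z,S)^D` holds
near `0`, then outside the horn `{dist(z,S) < ‖z‖^m}` and for `‖z‖` small enough one has
`‖W(z)‖ ≤ |H(z)|²·‖z‖^ν`, i.e. `‖[Z, X'/H](z)‖ ≤ ‖z‖^ν`. -/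
theorem near_invariance_estimate {n : ℕ} (r : ℝ) (hr : 0 < r)
    (X' : (Fin n → ℂ) → (Fin n → ℂ)) (H : (Fin n → ℂ) → ℂ)
    (hX' : AnalyticOnNhd ℂ X' (ball (0 : Fin n → ℂ) r))
    (hH : AnalyticOnNhd ℂ H (ball (0 : Fin n → ℂ) r))
    (hHnz : ¬ ∀ z ∈ ball (0 : Fin n → ℂ) r, H z = 0)
    (S : Set (Fin n → ℂ)) (hScl : IsClosed S) (hSB : S ⊆ ball (0 : Fin n → ℂ) r)
    (h0S : (0 : Fin n → ℂ) ∈ S)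
    (hzeroS : {z ∈ ball (0 : Fin n → ℂ) r | H z = 0} ⊆ S)
    (D : ℕ) (δ : ℝ) (hδ : 0 < δ)
    (hLoj : ∀ z : Fin n → ℂ, ‖z‖ < δ → infDist z S ^ D ≤ ‖H z‖)
    (ν m : ℕ) (μ : ℕ) (hμ : μ = ν + 2 + 2 * D * m)
    (Z : (Fin n → ℂ) → (Fin n → ℂ)) (hZ : AnalyticOnNhd ℂ Z (ball (0 : Fin n → ℂ) r))
    (W : (Fin n → ℂ) → (Fin n → ℂ))
    (hW : W = fun z => (fderiv ℂ H z (Z z)) • X' z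
        - H z • (fderiv ℂ X' z (Z z) - fderiv ℂ Z z (X' z)))
    (hvanish : ∀ j : ℕ, j < μ - 1 → iteratedFDeriv ℂ j W 0 = 0) :
    ∃ ε > 0, ∀ z : Fin n → ℂ, ‖z‖ ≤ ε → ‖z‖ ^ m ≤ infDist z S →
      ‖W z‖ ≤ ‖H z‖ ^ 2 * ‖z‖ ^ ν :=
  near_invariance_estimate_general r hr X' H hX' hH S D δ hδ hLoj ν m μ hμ Z hZ W hW hvanish
end
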